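/- For Re(s) > 1, ∫₀^∞ θ₂(e^{-t})θ₄(e^{-t}) t^{s-1} dt = Γ(s) · Σ_{(m₁,m₂)∈ℤ²} (-1)^{m₂} / ((m₁-1/2)² + m₂²)^s. -/

import Mathlib

open MeasureTheory

noncomputable def theta2 (q : ℝ) : ℝ := ∑' n : ℤ, q ^ (((n : ℝ) - 1/2)^2)

noncomputable def theta3 (q : ℝ) : ℝ := ∑' n : ℤ, q ^ ((n : ℝ)^2)

noncomputable def theta4 (q : ℝ) : ℝ := ∑' n : ℤ, (-1 : ℝ)^n * q ^ ((n : ℝ)^2)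

/-!
Expanding the product of the two theta series gives, for `t > 0`,
`θ₂(e^{-t}) θ₄(e^{-t}) = ∑_{m ∈ ℤ²} (-1)^{m₂} e^{-t p(m)}` with `p(m) = (m₁ - 1/2)² + m₂²`,
and the Mellin transform of `e^{-t p}` is `Γ(s) p^{-s}`. Exchanging sum and integral
(`hasSum_mellin`) needs `∑ p(m)^{-σ} < ∞` for `σ > 1`: since `|m₁ - 1/2| ≥ 1/2`, one has
`|m₁ - 1/2| |m₂ - 1/2| ≤ 2 p(m)`, so the double series is dominated by a product of two
one-dimensional `p`-series.
-/

open Real Complex Set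

lemma summable_exp_neg_mul_int_add_sq (c : ℝ) {t : ℝ} (ht : 0 < t) :
    Summable fun n : ℤ => rexp (-t * ((n : ℝ) + c) ^ 2) := by
  refine (HurwitzZeta.hasSum_int_evenKernel c (div_pos ht pi_pos)).summable.congr fun n => ?_
  congr 1
  field_simp

lemma theta2_exp_neg_eq_tsum (t : ℝ) :
    theta2 (rexp (-t)) = ∑' n : ℤ, rexp (-t * ((n : ℝ) - 1/2) ^ 2) := by
  simp only [theta2, ← Real.exp_mul]

lemma theta4_exp_neg_eq_tsum (t : ℝ) :
    theta4 (rexp (-t)) = ∑' n : ℤ, (-1 : ℝ) ^ n * rexp (-t * (n : ℝ) ^ 2) := by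
  simp only [theta4, ← Real.exp_mul]

lemma summable_norm_theta2_term {t : ℝ} (ht : 0 < t) :
    Summable fun n : ℤ => ‖rexp (-t * ((n : ℝ) - 1/2) ^ 2)‖ := by
  simpa [sub_eq_add_neg] using summable_exp_neg_mul_int_add_sq (-(1/2)) ht

lemma summable_norm_theta4_term {t : ℝ} (ht : 0 < t) :
    Summable fun n : ℤ => ‖(-1 : ℝ) ^ n * rexp (-t * (n : ℝ) ^ 2)‖ := by
  simpa [norm_zpow] using summable_exp_neg_mul_int_add_sq 0 ht

noncomputable def halfShiftNormSq (m : ℤ × ℤ) : ℝ := ((m.1 : ℝ) - 1/2) ^ 2 + (m.2 : ℝ) ^ 2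

lemma hasSum_theta2_mul_theta4 {t : ℝ} (ht : 0 < t) :
    HasSum (fun m : ℤ × ℤ => (-1 : ℝ) ^ m.2 * rexp (-halfShiftNormSq m * t))
      (theta2 (rexp (-t)) * theta4 (rexp (-t))) := by
  have h2 := (summable_norm_theta2_term ht).of_norm.hasSum
  have h4 := (summable_norm_theta4_term ht).of_norm.hasSum
  rw [theta2_exp_neg_eq_tsum, theta4_exp_neg_eq_tsum]
  refine (h2.mul h4 (summable_mul_of_summable_norm (summable_norm_theta2_term ht)
    (summable_norm_theta4_term ht))).congr_fun fun m => ?_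
  rw [mul_left_comm, ← Real.exp_add, halfShiftNormSq]
  ring_nf

lemma half_le_abs_int_sub_half (m : ℤ) : (1/2 : ℝ) ≤ |(m : ℝ) - 1/2| := by
  have h : (1 : ℝ) ≤ |2 * (m : ℝ) - 1| := by exact_mod_cast Int.one_le_abs (by omega)
  rw [show (m : ℝ) - 1/2 = (2 * (m : ℝ) - 1) / 2 by ring, abs_div, abs_two]
  linarith

lemma halfShiftNormSq_pos (m : ℤ × ℤ) : 0 < halfShiftNormSq m := by
  have := half_le_abs_int_sub_half m.1
  unfold halfShiftNormSq
  nlinarith [sq_abs ((m.1 : ℝ) - 1/2), sq_nonneg (m.2 : ℝ)]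

lemma abs_mul_abs_sub_half_le {a b : ℝ} (ha : 1/2 ≤ |a|) :
    |a| * |b - 1/2| ≤ 2 * (a ^ 2 + b ^ 2) := by
  have hb : |b - 1/2| ≤ |b| + |a| := by
    calc |b - 1/2| ≤ |b| + |(1/2 : ℝ)| := abs_sub _ _
      _ ≤ |b| + |a| := by rw [abs_of_pos (by norm_num : (0 : ℝ) < 1/2)]; linarith
  calc |a| * |b - 1/2| ≤ |a| * (|b| + |a|) := by gcongr
    _ ≤ 2 * (a ^ 2 + b ^ 2) := by
      nlinarith [sq_nonneg (|a| - |b|), sq_abs a, sq_abs b]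

lemma summable_one_div_halfShiftNormSq_rpow {σ : ℝ} (hσ : 1 < σ) :
    Summable fun m : ℤ × ℤ => 1 / halfShiftNormSq m ^ σ := by
  have h1 := (Real.summable_one_div_int_add_rpow (-(1/2)) σ).mpr hσ
  simp only [← sub_eq_add_neg] at h1
  refine Summable.of_nonneg_of_le (fun m => by have := halfShiftNormSq_pos m; positivity)
    (fun m => ?_)
    ((h1.mul_of_nonneg h1 (fun _ => by positivity) (fun _ => by positivity)).mul_left (2 ^ σ))
  have hx := half_le_abs_int_sub_half m.1
  have hy := half_le_abs_int_sub_half m.2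
  have hp := halfShiftNormSq_pos m
  have hle : |(m.1 : ℝ) - 1/2| * |(m.2 : ℝ) - 1/2| ≤ 2 * halfShiftNormSq m :=
    abs_mul_abs_sub_half_le hx
  calc 1 / halfShiftNormSq m ^ σ = 2 ^ σ / (2 * halfShiftNormSq m) ^ σ := by
        rw [Real.mul_rpow zero_le_two hp.le]; field_simp
    _ ≤ 2 ^ σ / (|(m.1 : ℝ) - 1/2| * |(m.2 : ℝ) - 1/2|) ^ σ := by gcongr
    _ = 2 ^ σ * (1 / |(m.1 : ℝ) - 1/2| ^ σ * (1 / |(m.2 : ℝ) - 1/2| ^ σ)) := by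
        rw [Real.mul_rpow (abs_nonneg _) (abs_nonneg _)]; ring

theorem stmt_4 (s : ℂ) (hs : 1 < s.re) :
    ∫ t in Set.Ioi (0:ℝ),
        ((theta2 (Real.exp (-t)) * theta4 (Real.exp (-t)) : ℝ) : ℂ) * (t : ℂ) ^ (s - 1)
      = Complex.Gamma s *
          ∑' m : ℤ × ℤ,
            ((-1 : ℂ) ^ m.2) / ((((m.1 : ℝ) - 1/2)^2 + (m.2 : ℝ)^2 : ℝ) : ℂ) ^ s := by
  have hF : ∀ t ∈ Ioi (0:ℝ),
      HasSum (fun m : ℤ × ℤ => (-1 : ℂ) ^ m.2 * rexp (-halfShiftNormSq m * t))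
      ((theta2 (rexp (-t)) * theta4 (rexp (-t)) : ℝ) : ℂ) := fun t ht => by
    simpa using (hasSum_ofReal.mpr (hasSum_theta2_mul_theta4 ht))
  have hnorm : Summable fun m : ℤ × ℤ => ‖(-1 : ℂ) ^ m.2‖ / halfShiftNormSq m ^ s.re := by
    simpa [norm_zpow] using summable_one_div_halfShiftNormSq_rpow hs
  have H := hasSum_mellin (fun m => Or.inr (halfShiftNormSq_pos m)) (by linarith) hF hnorm
  rw [mellin] at H
  simp only [smul_eq_mul, mul_comm _ (_ ^ (s - 1))] at H ⊢
  rw [H.tsum_eq.symm, ← tsum_mul_left]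
  exact tsum_congr fun m => mul_div_assoc _ _ _
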